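/- For every n ≥ 2 there exists A ⊆ {0,1,...,n-1} with 0, n-1 ∈ A, #A ≤ 3(⌈√n⌉ + 1), and C_{A,n} + C_{A,n} = [0,2]. -/

import Mathlib

open Pointwise

def linCantor (n : ℕ) (A : Set ℕ) : Set ℝ :=
  {x | ∃ a : ℕ → ℕ, (∀ i, a i ∈ A) ∧ x = ∑' i : ℕ, (a i : ℝ) / n ^ (i + 1)}

/-!
Digitwise addition gives `C_{A,n} + C_{B,n} = C_{A+B,n}` for bounded digit sets, and the full
digit set `[0, n)` gives `C_{[0,n),n} = [0,1]`. Hence `C_{A,n} + C_{A,n} = [0,2]` as soon as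
`A ⊆ [0, n)` and `A + A = [0, n) + [0, n) = [0, 2n - 2]`.

With `k = ⌈√n⌉`, the set `A` of digits `≤ k`, digits `≥ n - 1 - k` and multiples of `k` works:
every `m ≤ n - 1` is `(m % k) + k * (m / k)`, and every `m ≥ n` is the sum of a digit near
`n - 1` and either another digit near `n - 1` or a multiple of `k`.
-/

lemma summable_digits_div_pow {n N : ℕ} (hn : 1 < n) {a : ℕ → ℕ} (ha : ∀ i, a i ≤ N) :
    Summable fun i => (a i : ℝ) / n ^ (i + 1) := by
  have hn' : (1 : ℝ) < n := by exact_mod_cast hn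
  have hgeom : Summable fun i : ℕ => (N : ℝ) * (n : ℝ)⁻¹ ^ i :=
    (summable_geometric_of_lt_one (by positivity) (inv_lt_one_of_one_lt₀ hn')).mul_left _
  refine hgeom.of_nonneg_of_le (fun i => by positivity) fun i => ?_
  rw [inv_pow, ← div_eq_mul_inv]
  exact div_le_div₀ (by positivity) (by exact_mod_cast ha i) (by positivity)
    (pow_le_pow_right₀ hn'.le i.le_succ)

lemma summable_digits_div_pow_of_bddAbove {n : ℕ} (hn : 1 < n) {A : Set ℕ} (hA : BddAbove A)
    {a : ℕ → ℕ} (ha : ∀ i, a i ∈ A) : Summable fun i => (a i : ℝ) / n ^ (i + 1) :=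
  have ⟨_, hN⟩ := hA
  summable_digits_div_pow hn fun i => hN (ha i)

lemma linCantor_add {n : ℕ} (hn : 1 < n) {A B : Set ℕ} (hA : BddAbove A) (hB : BddAbove B) :
    linCantor n A + linCantor n B = linCantor n (A + B) := by
  apply Set.Subset.antisymm
  · rintro _ ⟨_, ⟨a, ha, rfl⟩, _, ⟨b, hb, rfl⟩, rfl⟩
    refine ⟨a + b, fun i => Set.add_mem_add (ha i) (hb i), ?_⟩
    simp only [Pi.add_apply, Nat.cast_add, add_div]
    exact ((summable_digits_div_pow_of_bddAbove hn hA ha).tsum_add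
      (summable_digits_div_pow_of_bddAbove hn hB hb)).symm
  · rintro _ ⟨c, hc, rfl⟩
    choose a ha b hb hab using fun i => Set.mem_add.1 (hc i)
    refine Set.mem_add.2 ⟨_, ⟨a, ha, rfl⟩, _, ⟨b, hb, rfl⟩, ?_⟩
    rw [← (summable_digits_div_pow_of_bddAbove hn hA ha).tsum_add
      (summable_digits_div_pow_of_bddAbove hn hB hb)]
    simp only [← hab, Nat.cast_add, add_div]

lemma tsum_digits_div_pow_eq_ofDigits {n : ℕ} (d : ℕ → Fin n) :
    ∑' i, ((d i : ℕ) : ℝ) / n ^ (i + 1) = Real.ofDigits d := by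
  simp only [Real.ofDigits, Real.ofDigitsTerm, div_eq_mul_inv]

lemma linCantor_Iio {n : ℕ} (hn : 1 < n) : linCantor n (Set.Iio n) = Set.Icc 0 1 := by
  apply Set.Subset.antisymm
  · rintro _ ⟨a, ha, rfl⟩
    rw [tsum_digits_div_pow_eq_ofDigits fun i => ⟨a i, ha i⟩]
    exact ⟨Real.ofDigits_nonneg _, Real.ofDigits_le_one _⟩
  · intro x hx
    obtain ⟨d, -, rfl⟩ := Real.ofDigits_SurjOn hn hx
    exact ⟨fun i => d i, fun i => (d i).isLt, (tsum_digits_div_pow_eq_ofDigits d).symm⟩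

lemma Icc_zero_one_add_self : Set.Icc (0 : ℝ) 1 + Set.Icc 0 1 = Set.Icc 0 2 := by
  apply Set.Subset.antisymm
  · exact (Set.Icc_add_Icc_subset _ _ _ _).trans_eq (by norm_num)
  · rintro x ⟨hx0, hx2⟩
    exact ⟨x / 2, ⟨by linarith, by linarith⟩, x / 2, ⟨by linarith, by linarith⟩, add_halves x⟩

theorem linCantor_add_self_eq_Icc {n : ℕ} (hn : 1 < n) {A : Finset ℕ} (hA : ∀ a ∈ A, a < n)
    (hcover : ∀ m ≤ 2 * (n - 1), ∃ a ∈ A, ∃ b ∈ A, a + b = m) :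
    linCantor n ↑A + linCantor n ↑A = Set.Icc 0 2 := by
  have hsum : (A : Set ℕ) + A = Set.Iio n + Set.Iio n := by
    apply Set.Subset.antisymm
    · exact Set.add_subset_add hA hA
    · rintro _ ⟨a, ha, b, hb, rfl⟩
      obtain ⟨a', ha', b', hb', hab⟩ := hcover (a + b) (by simp only [Set.mem_Iio] at ha hb; omega)
      exact Set.mem_add.2 ⟨a', ha', b', hb', hab⟩
  rw [linCantor_add hn A.bddAbove A.bddAbove, hsum, ← linCantor_add hn bddAbove_Iio bddAbove_Iio,
    linCantor_Iio hn, Icc_zero_one_add_self]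

def sqrtDigits (n k : ℕ) : Finset ℕ :=
  (Finset.range n).filter fun x => x ≤ k ∨ n - 1 - k ≤ x ∨ k ∣ x

lemma mem_sqrtDigits {n k x : ℕ} :
    x ∈ sqrtDigits n k ↔ x < n ∧ (x ≤ k ∨ n - 1 - k ≤ x ∨ k ∣ x) := by
  simp [sqrtDigits]

lemma card_sqrtDigits_le {n k : ℕ} (hnk : n ≤ k * k) : (sqrtDigits n k).card ≤ 3 * (k + 1) := by
  have hlow : ((Finset.range n).filter (· ≤ k)).card ≤ k + 1 := by
    refine (Finset.card_le_card fun x hx => ?_).trans (Finset.card_range _).le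
    simp only [Finset.mem_filter, Finset.mem_range] at hx ⊢
    omega
  have hhigh : ((Finset.range n).filter (n - 1 - k ≤ ·)).card ≤ k + 1 := by
    refine (Finset.card_le_card (t := Finset.Icc (n - 1 - k) (n - 1)) fun x hx => ?_).trans ?_
    · simp only [Finset.mem_filter, Finset.mem_range, Finset.mem_Icc] at hx ⊢
      omega
    · rw [Nat.card_Icc]
      omega
  have hmult : ((Finset.range n).filter (k ∣ ·)).card ≤ k + 1 := by
    refine (Finset.card_le_card (t := (Finset.range k).image (k * ·)) ?_).trans
      (Finset.card_image_le.trans (by simp))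
    rintro _ hx
    obtain ⟨hxn, c, rfl⟩ := Finset.mem_filter.1 hx
    refine Finset.mem_image.2 ⟨c, Finset.mem_range.2 ?_, rfl⟩
    exact Nat.lt_of_mul_lt_mul_left (lt_of_lt_of_le (Finset.mem_range.1 hxn) hnk)
  rw [sqrtDigits, Finset.filter_or, Finset.filter_or]
  calc _ ≤ _ := Finset.card_union_le _ _
    _ ≤ _ := Nat.add_le_add_left (Finset.card_union_le _ _) _
    _ ≤ (k + 1) + ((k + 1) + (k + 1)) := Nat.add_le_add hlow (Nat.add_le_add hhigh hmult)
    _ = 3 * (k + 1) := by ring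

lemma exists_add_eq_of_le_two_mul {n k m : ℕ} (hn : 0 < n) (hk : 0 < k) (hm : m ≤ 2 * (n - 1)) :
    ∃ a ∈ sqrtDigits n k, ∃ b ∈ sqrtDigits n k, a + b = m := by
  simp only [mem_sqrtDigits]
  rcases le_or_gt m (n - 1) with hmn | hmn
  · refine ⟨m % k, ⟨?_, Or.inl (Nat.mod_lt m hk).le⟩, k * (m / k), ⟨?_, Or.inr (Or.inr ⟨_, rfl⟩)⟩,
      Nat.mod_add_div m k⟩ <;> have := Nat.mod_add_div m k <;> omega
  set s := m - (n - 1)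
  rcases le_or_gt (n - 1 - s) (2 * k) with hs | hs
  · -- `m = (n - 1 - i) + (n - 1 - j)` with `i + j = n - 1 - s ≤ 2k`
    refine ⟨n - 1 - min k (n - 1 - s), ⟨by omega, Or.inr (Or.inl (by omega))⟩,
      n - 1 - (n - 1 - s - min k (n - 1 - s)), ⟨by omega, Or.inr (Or.inl (by omega))⟩, by omega⟩
  · -- `m = (n - 1 - (k - r)) + k (q + 1)` with `s = k q + r`
    obtain ⟨q, r, hrk, hqr⟩ : ∃ q r, r < k ∧ s = k * q + r :=
      ⟨s / k, s % k, Nat.mod_lt s hk, (Nat.div_add_mod s k).symm⟩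
    refine ⟨n - 1 - (k - r), ⟨by omega, Or.inr (Or.inl (by omega))⟩,
      k * (q + 1), ⟨by rw [Nat.mul_succ]; omega, Or.inr (Or.inr ⟨_, rfl⟩)⟩, by rw [Nat.mul_succ]; omega⟩

lemma le_ceil_sqrt_mul_self (n : ℕ) : n ≤ ⌈Real.sqrt n⌉₊ * ⌈Real.sqrt n⌉₊ := by
  have : (n : ℝ) ≤ ⌈Real.sqrt n⌉₊ * ⌈Real.sqrt n⌉₊ :=
    calc (n : ℝ) = Real.sqrt n * Real.sqrt n := (Real.mul_self_sqrt n.cast_nonneg).symm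
      _ ≤ _ := mul_self_le_mul_self (Real.sqrt_nonneg _) (Nat.le_ceil _)
  exact_mod_cast this

/-- For every `n ≥ 2` there is an `n`-good set `A` of size `O(√n)`. -/
theorem exists_good_small (n : ℕ) (hn : 2 ≤ n) :
    ∃ A : Finset ℕ, 0 ∈ A ∧ n - 1 ∈ A ∧ (∀ a ∈ A, a < n) ∧
      A.card ≤ 3 * (⌈Real.sqrt n⌉₊ + 1) ∧
      linCantor n ↑A + linCantor n ↑A = Set.Icc (0 : ℝ) 2 := by
  set k := ⌈Real.sqrt n⌉₊
  have hnk : n ≤ k * k := le_ceil_sqrt_mul_self n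
  have hk : 0 < k := Nat.pos_of_ne_zero fun hk => by simp only [hk] at hnk; omega
  have hlt : ∀ a ∈ sqrtDigits n k, a < n := fun a ha => (mem_sqrtDigits.1 ha).1
  refine ⟨sqrtDigits n k, mem_sqrtDigits.2 ⟨by omega, Or.inl k.zero_le⟩,
    mem_sqrtDigits.2 ⟨by omega, Or.inr (Or.inl (by omega))⟩, hlt, card_sqrtDigits_le hnk, ?_⟩
  exact linCantor_add_self_eq_Icc hn hlt fun m hm => exists_add_eq_of_le_two_mul (by omega) hk hm
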